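/- Let H be a Hermitian operator on a finite-dimensional complex Hilbert space and let ρ be a positive semidefinite operator. Define the ergotropy W_max(ρ) = max over unitaries U of tr(ρH) - tr(UρU†H). Then W_max is concave: for any states ρ₁, ρ₂ and s ∈ [0,1], W_max(sρ₁ + (1-s)ρ₂) ≤ s·W_max(ρ₁) + (1-s)·W_max(ρ₂). -/

import Mathlib

open Matrix ComplexOrder

/-- The work extracted from state `ρ` (w.r.t. Hamiltonian `H`) by the unitary `U`:
`W(ρ,U) = tr(ρH) - tr(UρU†H)`. -/
noncomputable def extractedWork {n : Type*} [Fintype n] [DecidableEq n]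
    (H ρ U : Matrix n n ℂ) : ℝ :=
  ((ρ * H).trace - (U * ρ * Uᴴ * H).trace).re

/-- The ergotropy `W_max(ρ)`: the maximal extracted work over all unitaries. -/
noncomputable def ergotropy {n : Type*} [Fintype n] [DecidableEq n]
    (H ρ : Matrix n n ℂ) : ℝ :=
  ⨆ U : Matrix.unitaryGroup n ℂ, extractedWork H ρ (U : Matrix n n ℂ)

/-!
The ergotropy is the pointwise supremum, over the compact unitary group, of the functionals
`ρ ↦ W(ρ, U)`, each of which is real-linear in `ρ`; a bounded-above supremum of convex functions
is convex.
-/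

theorem convexOn_ciSup {ι E : Type*} [Nonempty ι] [AddCommMonoid E] [Module ℝ E] {s : Set E}
    {f : ι → E → ℝ} (hf : ∀ i, ConvexOn ℝ s (f i))
    (hbdd : ∀ x ∈ s, BddAbove (Set.range fun i => f i x)) :
    ConvexOn ℝ s fun x => ⨆ i, f i x := by
  refine ⟨(hf (Classical.arbitrary ι)).1, fun x hx y hy a b ha hb hab => ciSup_le fun i => ?_⟩
  calc f i (a • x + b • y) ≤ a • f i x + b • f i y := (hf i).2 hx hy ha hb hab
    _ ≤ a • (⨆ j, f j x) + b • ⨆ j, f j y :=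
      add_le_add (smul_le_smul_of_nonneg_left (le_ciSup (hbdd x hx) i) ha)
        (smul_le_smul_of_nonneg_left (le_ciSup (hbdd y hy) i) hb)

theorem Matrix.isCompact_unitaryGroup {𝕜 n : Type*} [RCLike 𝕜] [Fintype n] [DecidableEq n] :
    IsCompact (unitaryGroup n 𝕜 : Set (Matrix n n 𝕜)) := by
  have hball : IsCompact (Set.univ.pi fun (_ : n) => Set.univ.pi fun (_ : n) =>
      Metric.closedBall (0 : 𝕜) 1) :=
    isCompact_univ_pi fun _ => isCompact_univ_pi fun _ => isCompact_closedBall 0 1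
  -- Pinning `X` makes `isClosed_unitary` use matrix multiplication, not that of `n → n → 𝕜`.
  exact IsCompact.of_isClosed_subset (X := Matrix n n 𝕜) hball isClosed_unitary
    fun _ hU => Set.mem_univ_pi.2 fun i => Set.mem_univ_pi.2 fun j =>
      mem_closedBall_zero_iff.2 (entry_norm_bound_of_unitary hU i j)

section Ergotropy

variable {n : Type*} [Fintype n] [DecidableEq n]

instance : CompactSpace (unitaryGroup n ℂ) :=
  isCompact_iff_compactSpace.1 Matrix.isCompact_unitaryGroup

noncomputable def extractedWorkLinearMap (H U : Matrix n n ℂ) : Matrix n n ℂ →ₗ[ℝ] ℝ where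
  toFun ρ := extractedWork H ρ U
  map_add' ρ σ := by
    simp only [extractedWork, add_mul, mul_add, trace_add, Complex.add_re, Complex.sub_re]
    ring
  map_smul' c ρ := by
    simp only [extractedWork, smul_mul, Matrix.mul_smul, trace_smul, Complex.sub_re,
      Complex.smul_re, smul_eq_mul, RingHom.id_apply]
    ring

theorem bddAbove_range_extractedWork (H ρ : Matrix n n ℂ) :
    BddAbove (Set.range fun U : unitaryGroup n ℂ => extractedWork H ρ U) :=
  (isCompact_range (by unfold extractedWork; fun_prop)).bddAbove

theorem convexOn_ergotropy (H : Matrix n n ℂ) : ConvexOn ℝ Set.univ (ergotropy H) :=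
  convexOn_ciSup (fun U => (extractedWorkLinearMap H U).convexOn convex_univ)
    fun ρ _ => bddAbove_range_extractedWork H ρ

end Ergotropy

theorem ergotropy_concave {n : Type*} [Fintype n] [DecidableEq n]
    (H : Matrix n n ℂ)
    (ρ₁ ρ₂ : Matrix n n ℂ)
    (s : ℝ) (hs₀ : 0 ≤ s) (hs₁ : s ≤ 1) :
    ergotropy H (s • ρ₁ + (1 - s) • ρ₂) ≤ s * ergotropy H ρ₁ + (1 - s) * ergotropy H ρ₂ :=
  (convexOn_ergotropy H).2 (Set.mem_univ _) (Set.mem_univ _) hs₀ (sub_nonneg.2 hs₁)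
    (add_sub_cancel s 1)
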